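/- For every integer n ≥ 2 there exists an exclusive error model that is not induced by any inclusive error model: there exists a probability distribution Q on (ZMod 2)^n such that no function P from the nonzero elements of (ZMod 2)^n to [0,1] satisfies Q(f) = Σ_{S ⊆ E, Σ_{s∈S} s = f} ∏_{s∈S} P(s) ∏_{s∈E∖S} (1 − P(s)) for all f, where E is the set of nonzero elements of (ZMod 2)^n. -/

import Mathlib

/-!
The Fourier transform `Q̂` of an inclusive model `Q` factorizes: at an additive character `ψ` it equals
`∏ s ∈ E, (1 - P s + P s * ψ s)`. Real characters of a finite group take values `±1`, so for two
characters `ψ, φ` the three factors at `s` belonging to `ψ`, `φ` and `ψ * φ` multiply to `1` or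
`(1 - 2 P s)²`; hence `Q̂ ψ * Q̂ φ * Q̂ (ψ * φ) ≥ 0` for every inclusive `Q`. The uniform distribution
on `{0, eᵢ, eⱼ}` has coefficients `1/3, 1/3, -1/3` at the coordinate signs `χᵢ, χⱼ, χᵢ χⱼ`.
-/

open Finset

section AddChar

variable {V : Type*}

lemma AddChar.map_sum_eq_prod {ι R : Type*} [AddCommMonoid V] [CommMonoid R] (ψ : AddChar V R)
    (S : Finset ι) (v : ι → V) : ψ (∑ i ∈ S, v i) = ∏ i ∈ S, ψ (v i) :=
  map_prod ψ.toMonoidHom (fun i => Multiplicative.ofAdd (v i)) S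

lemma AddChar.eq_one_or_eq_neg_one [AddCommGroup V] [Finite V] (ψ : AddChar V ℝ) (x : V) :
    ψ x = 1 ∨ ψ x = -1 := by
  have h : |ψ x| ^ Nat.card V = 1 := by
    rw [← abs_pow, ← ψ.map_nsmul_eq_pow, card_nsmul_eq_zero', ψ.map_zero_eq_one, abs_one]
  exact (abs_eq zero_le_one).mp ((pow_eq_one_iff_of_nonneg (abs_nonneg _) Nat.card_pos.ne').mp h)

end AddChar

lemma mul_mul_sign_factors_nonneg {p x y : ℝ} (hx : x = 1 ∨ x = -1) (hy : y = 1 ∨ y = -1) :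
    0 ≤ (p * x + (1 - p)) * (p * y + (1 - p)) * (p * (x * y) + (1 - p)) := by
  rcases hx with rfl | rfl <;> rcases hy with rfl | rfl <;> nlinarith [sq_nonneg (1 - 2 * p)]

section InclusiveDist

variable {V : Type*} [DecidableEq V]

def inclusiveDist [AddCommMonoid V] {R : Type*} [CommRing R] (E : Finset V) (P : V → R) (f : V) :
    R :=
  ∑ S ∈ E.powerset.filter (fun S => ∑ s ∈ S, s = f), (∏ s ∈ S, P s) * ∏ s ∈ E \ S, (1 - P s)

theorem sum_inclusiveDist_mul_addChar [AddCommMonoid V] [Fintype V] {R : Type*} [CommRing R]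
    (ψ : AddChar V R) (E : Finset V) (P : V → R) :
    ∑ f, inclusiveDist E P f * ψ f = ∏ s ∈ E, (P s * ψ s + (1 - P s)) := by
  calc ∑ f, inclusiveDist E P f * ψ f
      = ∑ f, ∑ S ∈ E.powerset with ∑ s ∈ S, s = f,
          (∏ s ∈ S, P s) * (∏ s ∈ E \ S, (1 - P s)) * ψ (∑ s ∈ S, s) := by
        refine sum_congr rfl fun f _ => ?_
        rw [inclusiveDist, sum_mul]
        exact sum_congr rfl fun S hS => by rw [(mem_filter.mp hS).2]
    _ = ∑ S ∈ E.powerset, (∏ s ∈ S, P s * ψ s) * ∏ s ∈ E \ S, (1 - P s) := by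
        rw [sum_fiberwise]
        refine sum_congr rfl fun S _ => ?_
        rw [ψ.map_sum_eq_prod, prod_mul_distrib]
        ring
    _ = ∏ s ∈ E, (P s * ψ s + (1 - P s)) := (prod_add _ _ _).symm

variable [AddCommGroup V] [Fintype V]

theorem inclusiveDist_fourier_triple_nonneg (ψ φ : AddChar V ℝ) (E : Finset V) (P : V → ℝ) :
    0 ≤ (∑ f, inclusiveDist E P f * ψ f) * (∑ f, inclusiveDist E P f * φ f) *
      ∑ f, inclusiveDist E P f * (ψ * φ) f := by
  simp only [sum_inclusiveDist_mul_addChar, ← prod_mul_distrib]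
  exact prod_nonneg fun s _ =>
    mul_mul_sign_factors_nonneg (ψ.eq_one_or_eq_neg_one s) (φ.eq_one_or_eq_neg_one s)

theorem ne_inclusiveDist_of_fourier_triple_neg {Q : V → ℝ} (ψ φ : AddChar V ℝ)
    (hQ : (∑ f, Q f * ψ f) * (∑ f, Q f * φ f) * ∑ f, Q f * (ψ * φ) f < 0) (E : Finset V)
    (P : V → ℝ) : Q ≠ inclusiveDist E P := by
  rintro rfl
  exact (inclusiveDist_fourier_triple_nonneg ψ φ E P).not_gt hQ

end InclusiveDist

section UniformOn

variable {V : Type*} [DecidableEq V]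

noncomputable def uniformOn (T : Finset V) (f : V) : ℝ := if f ∈ T then (#T : ℝ)⁻¹ else 0

lemma uniformOn_nonneg (T : Finset V) (f : V) : 0 ≤ uniformOn T f := by
  unfold uniformOn; split_ifs <;> positivity

variable [Fintype V]

lemma sum_uniformOn_mul (T : Finset V) (g : V → ℝ) :
    ∑ f, uniformOn T f * g f = (∑ t ∈ T, g t) / #T := by
  simp only [uniformOn, ite_mul, zero_mul, sum_ite_mem, univ_inter, div_eq_inv_mul, mul_sum]

lemma sum_uniformOn {T : Finset V} (hT : T.Nonempty) : ∑ f, uniformOn T f = 1 := by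
  simpa [hT.card_pos.ne'] using sum_uniformOn_mul T 1

end UniformOn

section Cube

variable {n : ℕ}

noncomputable def coordSign (i : Fin n) : AddChar (Fin n → ZMod 2) ℝ :=
  (AddChar.zmodChar 2 (by norm_num : (-1 : ℝ) ^ 2 = 1)).compAddMonoidHom (Pi.evalAddMonoidHom _ i)

@[simp]
lemma coordSign_single_self (i : Fin n) : coordSign i (Pi.single i 1) = -1 := by
  rw [coordSign, AddChar.compAddMonoidHom_apply, Pi.evalAddMonoidHom_apply, AddChar.zmodChar_apply,
    Pi.single_eq_same, ZMod.val_one, pow_one]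

@[simp]
lemma coordSign_single_of_ne {i j : Fin n} (h : i ≠ j) : coordSign i (Pi.single j 1) = 1 := by
  rw [coordSign, AddChar.compAddMonoidHom_apply, Pi.evalAddMonoidHom_apply, AddChar.zmodChar_apply,
    Pi.single_eq_of_ne h, ZMod.val_zero, pow_zero]

lemma single_ne_single {i j : Fin n} (h : i ≠ j) :
    (Pi.single i 1 : Fin n → ZMod 2) ≠ Pi.single j 1 :=
  fun he => by simpa [h] using congrFun he i

lemma fourier_triple_uniformOn_zero_single_single {i j : Fin n} (hij : i ≠ j) :
    let Q := uniformOn ({0, Pi.single i 1, Pi.single j 1} : Finset (Fin n → ZMod 2))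
    (∑ f, Q f * coordSign i f) * (∑ f, Q f * coordSign j f) *
      ∑ f, Q f * (coordSign i * coordSign j) f = -1 / 27 := by
  have hi : (Pi.single i 1 : Fin n → ZMod 2) ∉ ({Pi.single j 1} : Finset _) := by
    simpa using single_ne_single hij
  have h0 : (0 : Fin n → ZMod 2) ∉ ({Pi.single i 1, Pi.single j 1} : Finset _) := by
    simp [eq_comm (a := (0 : Fin n → ZMod 2))]
  simp only [sum_uniformOn_mul, sum_insert h0, sum_insert hi, sum_singleton,
    card_insert_of_notMem h0, card_insert_of_notMem hi, card_singleton, AddChar.mul_apply,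
    AddChar.map_zero_eq_one, coordSign_single_self, coordSign_single_of_ne hij,
    coordSign_single_of_ne hij.symm]
  norm_num

end Cube

/-- For every `n ≥ 2` there exists an exclusive error model (a probability
distribution `Q` on `(ZMod 2)^n`) that is not induced by any inclusive error model
`P : E → [0,1]`, where `E` is the set of nonzero elements of `(ZMod 2)^n`. -/
theorem exists_exclusive_not_inclusive (n : ℕ) (hn : 2 ≤ n) :
    ∃ Q : (Fin n → ZMod 2) → ℝ,
      (∀ f, 0 ≤ Q f) ∧ (∑ f, Q f = 1) ∧
      ¬ ∃ P : (Fin n → ZMod 2) → ℝ,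
          (∀ f : Fin n → ZMod 2, f ≠ 0 → 0 ≤ P f ∧ P f ≤ 1) ∧
          ∀ f : Fin n → ZMod 2,
            Q f = ∑ S ∈ (univ.filter fun g : Fin n → ZMod 2 => g ≠ 0).powerset.filter
                    (fun S => ∑ s ∈ S, s = f),
                  (∏ s ∈ S, P s) *
                    ∏ s ∈ (univ.filter fun g : Fin n → ZMod 2 => g ≠ 0) \ S, (1 - P s) := by
  let i : Fin n := ⟨0, by omega⟩
  let j : Fin n := ⟨1, by omega⟩
  have hij : i ≠ j := by simp [i, j]
  refine ⟨uniformOn {0, Pi.single i 1, Pi.single j 1}, uniformOn_nonneg _,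
    sum_uniformOn (insert_nonempty _ _), ?_⟩
  rintro ⟨P, -, hQP⟩
  exact ne_inclusiveDist_of_fourier_triple_neg (coordSign i) (coordSign j)
    ((fourier_triple_uniformOn_zero_single_single hij).trans_lt (by norm_num)) _ P (funext hQP)
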